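/- arXiv:1312.3202 — 2 statements merged into one kernel-verified Lean document; each statement's English description precedes it below -/
import Mathlib

section
/- Let m₀ > 0 and let Y₂ : (0,1] → [0,∞) be continuous with Y₂(a) ≤ C·a² near a = 0 for some C ≥ 0. Then the integral ∫₀¹ (a² m₀ + 2Y₂(a))^{−1/2} da diverges. Hence with z(a) = −√(a² m₀ + 2Y₂(a)), the comoving collapse time ∫₀¹ (−1/z(a)) da is infinite. -/
open Real Set MeasureTheory

/-- If Y₂ ≥ 0 satisfies Y₂(a) ≤ Ca² near a = 0, then
∫₀¹ (a²m₀ + 2Y₂(a))^{-1/2} da diverges: the comoving collapse time is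
infinite. -/
theorem stmt_12 (m₀ C : ℝ) (hm₀ : 0 < m₀) (hC : 0 ≤ C)
    (Y₂ : ℝ → ℝ) (hY₂c : ContinuousOn Y₂ (Set.Ioc 0 1))
    (hY₂nn : ∀ a ∈ Set.Ioc (0:ℝ) 1, 0 ≤ Y₂ a)
    (hY₂b : ∃ δ > (0:ℝ), ∀ a ∈ Set.Ioc (0:ℝ) δ, Y₂ a ≤ C * a ^ 2) :
    ¬ IntegrableOn (fun a => (a ^ 2 * m₀ + 2 * Y₂ a) ^ (-(1:ℝ)/2))
      (Set.Ioc 0 1) volume := by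
  obtain ⟨δ, hδ, hb⟩ := hY₂b
  intro h
  set δ' : ℝ := min δ 1 with hδ'def
  have hδ'pos : 0 < δ' := lt_min hδ zero_lt_one
  have hδ'1 : δ' ≤ 1 := min_le_right _ _
  set K : ℝ := (m₀ + 2 * C) ^ ((1:ℝ)/2) with hK
  have hM : 0 < m₀ + 2 * C := by linarith
  have h' : IntegrableOn (fun a => (a ^ 2 * m₀ + 2 * Y₂ a) ^ (-(1:ℝ)/2))
      (Ioo 0 δ') volume :=
    h.mono_set (fun x hx => ⟨hx.1, hx.2.le.trans hδ'1⟩)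
  have hint : IntegrableOn (fun x : ℝ => x ^ (-1 : ℝ)) (Ioo 0 δ') volume := by
    refine ((h'.const_mul K).mono' (f := fun x : ℝ => x ^ (-1:ℝ)) ?_ ?_)
    · exact (measurable_id.pow_const _).aestronglyMeasurable
    · filter_upwards [ae_restrict_mem measurableSet_Ioo] with x hx
      have hx0 : 0 < x := hx.1
      have hxδ : x ≤ δ := hx.2.le.trans (min_le_left _ _)
      have hx1 : x ≤ 1 := hx.2.le.trans hδ'1
      have hYb : Y₂ x ≤ C * x ^ 2 := hb x ⟨hx0, hxδ⟩
      have hYnn : 0 ≤ Y₂ x := hY₂nn x ⟨hx0, hx1⟩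
      have hApos : 0 < x ^ 2 * m₀ + 2 * Y₂ x := by positivity
      have hAle : x ^ 2 * m₀ + 2 * Y₂ x ≤ x ^ 2 * (m₀ + 2 * C) := by nlinarith
      have key : (x ^ 2 * (m₀ + 2 * C)) ^ (-(1:ℝ)/2)
          ≤ (x ^ 2 * m₀ + 2 * Y₂ x) ^ (-(1:ℝ)/2) :=
        Real.rpow_le_rpow_of_nonpos hApos hAle (by norm_num)
      have hxx : (x ^ 2 * (m₀ + 2 * C)) ^ (-(1:ℝ)/2)
          = x ^ (-1:ℝ) * (m₀ + 2 * C) ^ (-(1:ℝ)/2) := by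
        rw [Real.mul_rpow (by positivity) hM.le]
        congr 1
        rw [← Real.rpow_natCast x 2, ← Real.rpow_mul hx0.le]
        norm_num
      have hxnorm : ‖x ^ (-1:ℝ)‖ = x ^ (-1:ℝ) :=
        Real.norm_of_nonneg (Real.rpow_nonneg hx0.le _)
      rw [hxnorm]
      have : x ^ (-1:ℝ) = K * (x ^ (-1:ℝ) * (m₀ + 2 * C) ^ (-(1:ℝ)/2)) := by
        rw [hK, mul_comm (x ^ (-1:ℝ)), ← mul_assoc,
          ← Real.rpow_add hM, ← Real.rpow_zero (m₀ + 2 * C)]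
        · norm_num
      calc x ^ (-1:ℝ) = K * (x ^ (-1:ℝ) * (m₀ + 2 * C) ^ (-(1:ℝ)/2)) := this
        _ = K * (x ^ 2 * (m₀ + 2 * C)) ^ (-(1:ℝ)/2) := by rw [hxx]
        _ ≤ K * (x ^ 2 * m₀ + 2 * Y₂ x) ^ (-(1:ℝ)/2) := by
            apply mul_le_mul_of_nonneg_left key (Real.rpow_nonneg hM.le _)
  rw [intervalIntegral.integrableOn_Ioo_rpow_iff hδ'pos] at hint
  linarith
end

section
/- Let F, Y : (0,r₀)×(0,1] → ℝ be C¹ with Y > 0, and suppose F(r,a) = 1 + F₂(a)r² + o(r²) and Y(r,a) = 1 + Y₂(a)r² + o(r²) with F₂, Y₂ continuously differentiable, uniformly in a on compact subsets of (0,1], together with the analogous expansions for the partial derivatives. If the field equation r(F_r + wF_a)Y − (wr + a)Y_a F = 0 holds with w(r,a) = O(r), then 2F₂(a) = a·Y₂'(a) for all a ∈ (0,1]. -/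
open Real Set Filter Asymptotics
open Topology

/-- Leading-order content of field equation (12d): if F = 1 + F₂(a)r² + o(r²)
and Y = 1 + Y₂(a)r² + o(r²) (with analogous expansions for the partial
derivatives), w = O(r), Y > 0, and r(F_r + wF_a)Y - (wr + a)Y_aF = 0, then
2F₂(a) = aY₂'(a) on (0,1]. -/
theorem stmt_19 (r₀ : ℝ) (hr₀ : 0 < r₀) (F Y w : ℝ → ℝ → ℝ) (F₂ Y₂ : ℝ → ℝ)
    (hF₂ : ContDiff ℝ 1 F₂) (hY₂ : ContDiff ℝ 1 Y₂)
    (hFd : ∀ r ∈ Set.Ioo (0:ℝ) r₀, ∀ a ∈ Set.Ioc (0:ℝ) 1,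
      DifferentiableAt ℝ (fun s => F s a) r ∧ DifferentiableAt ℝ (F r) a)
    (hYd : ∀ r ∈ Set.Ioo (0:ℝ) r₀, ∀ a ∈ Set.Ioc (0:ℝ) 1,
      DifferentiableAt ℝ (Y r) a)
    (hYpos : ∀ r ∈ Set.Ioo (0:ℝ) r₀, ∀ a ∈ Set.Ioc (0:ℝ) 1, 0 < Y r a)
    (hF : ∀ a ∈ Set.Ioc (0:ℝ) 1,
      (fun r => F r a - 1 - F₂ a * r ^ 2) =o[nhdsWithin 0 (Set.Ioi 0)]
        fun r => r ^ 2)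
    (hY : ∀ a ∈ Set.Ioc (0:ℝ) 1,
      (fun r => Y r a - 1 - Y₂ a * r ^ 2) =o[nhdsWithin 0 (Set.Ioi 0)]
        fun r => r ^ 2)
    (hFr : ∀ a ∈ Set.Ioc (0:ℝ) 1,
      (fun r => deriv (fun s => F s a) r - 2 * F₂ a * r)
        =o[nhdsWithin 0 (Set.Ioi 0)] fun r => r)
    (hFa : ∀ a ∈ Set.Ioc (0:ℝ) 1,
      (fun r => deriv (F r) a - deriv F₂ a * r ^ 2)
        =o[nhdsWithin 0 (Set.Ioi 0)] fun r => r ^ 2)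
    (hYa : ∀ a ∈ Set.Ioc (0:ℝ) 1,
      (fun r => deriv (Y r) a - deriv Y₂ a * r ^ 2)
        =o[nhdsWithin 0 (Set.Ioi 0)] fun r => r ^ 2)
    (hwO : ∃ C : ℝ, ∀ r ∈ Set.Ioo (0:ℝ) r₀, ∀ a ∈ Set.Ioc (0:ℝ) 1,
      |w r a| ≤ C * r)
    (heq : ∀ r ∈ Set.Ioo (0:ℝ) r₀, ∀ a ∈ Set.Ioc (0:ℝ) 1,
      r * (deriv (fun s => F s a) r + w r a * deriv (F r) a) * Y r a -
        (w r a * r + a) * deriv (Y r) a * F r a = 0) :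
    ∀ a ∈ Set.Ioc (0:ℝ) 1, 2 * F₂ a = a * deriv Y₂ a := by
  intro a ha
  obtain ⟨C, hC⟩ := hwO
  set L := nhdsWithin (0:ℝ) (Set.Ioi 0) with hLdef
  have hmem : ∀ᶠ r in L, r ∈ Set.Ioo (0:ℝ) r₀ :=
    Ioo_mem_nhdsGT_of_mem ⟨le_refl 0, hr₀⟩
  have hrpos : ∀ᶠ r in L, (0:ℝ) < r := self_mem_nhdsWithin
  have hrt : Tendsto (fun r : ℝ => r) L (𝓝 0) :=
    Filter.tendsto_id.mono_left nhdsWithin_le_nhds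
  have ht2 : Tendsto (fun r : ℝ => r ^ 2) L (𝓝 0) := by
    simpa using hrt.pow 2
  -- F → 1
  have hFlim : Tendsto (fun r => F r a) L (𝓝 1) := by
    have h1 : Tendsto (fun r => F r a - 1 - F₂ a * r ^ 2) L (𝓝 0) :=
      (hF a ha).isBigO.trans_tendsto ht2
    have h2 := (h1.add ((ht2.const_mul (F₂ a)).add_const 1))
    have h2' : Tendsto (fun r => (F r a - 1 - F₂ a * r ^ 2) + (F₂ a * r ^ 2 + 1)) L
        (𝓝 (0 + (F₂ a * 0 + 1))) := h2
    simpa using h2'.congr (fun r => by ring)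
  -- Y → 1
  have hYlim : Tendsto (fun r => Y r a) L (𝓝 1) := by
    have h1 : Tendsto (fun r => Y r a - 1 - Y₂ a * r ^ 2) L (𝓝 0) :=
      (hY a ha).isBigO.trans_tendsto ht2
    have h2' : Tendsto (fun r => (Y r a - 1 - Y₂ a * r ^ 2) + (Y₂ a * r ^ 2 + 1)) L
        (𝓝 (0 + (Y₂ a * 0 + 1))) := h1.add ((ht2.const_mul (Y₂ a)).add_const 1)
    simpa using h2'.congr (fun r => by ring)
  -- deriv F in r, divided by r
  have hA : Tendsto (fun r => deriv (fun s => F s a) r / r) L (𝓝 (2 * F₂ a)) := by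
    have h1 := (hFr a ha).tendsto_div_nhds_zero
    have h2 : Tendsto (fun r => (deriv (fun s => F s a) r - 2 * F₂ a * r) / r + 2 * F₂ a) L
        (𝓝 (0 + 2 * F₂ a)) := h1.add_const _
    rw [zero_add] at h2
    apply h2.congr'
    filter_upwards [hrpos] with r hr
    have : r ≠ 0 := ne_of_gt hr
    field_simp
    ring
  -- deriv F in a, divided by r^2
  have hB : Tendsto (fun r => deriv (F r) a / r ^ 2) L (𝓝 (deriv F₂ a)) := by
    have h1 := (hFa a ha).tendsto_div_nhds_zero
    have h2 : Tendsto (fun r => (deriv (F r) a - deriv F₂ a * r ^ 2) / r ^ 2 + deriv F₂ a) L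
        (𝓝 (0 + deriv F₂ a)) := h1.add_const _
    rw [zero_add] at h2
    apply h2.congr'
    filter_upwards [hrpos] with r hr
    have : r ≠ 0 := ne_of_gt hr
    field_simp
    ring
  -- deriv Y in a, divided by r^2
  have hCY : Tendsto (fun r => deriv (Y r) a / r ^ 2) L (𝓝 (deriv Y₂ a)) := by
    have h1 := (hYa a ha).tendsto_div_nhds_zero
    have h2 : Tendsto (fun r => (deriv (Y r) a - deriv Y₂ a * r ^ 2) / r ^ 2 + deriv Y₂ a) L
        (𝓝 (0 + deriv Y₂ a)) := h1.add_const _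
    rw [zero_add] at h2
    apply h2.congr'
    filter_upwards [hrpos] with r hr
    have : r ≠ 0 := ne_of_gt hr
    field_simp
    ring
  -- w → 0
  have hw0 : Tendsto (fun r => w r a) L (𝓝 0) := by
    have hg : Tendsto (fun r : ℝ => C * r) L (𝓝 0) := by
      simpa using hrt.const_mul C
    refine squeeze_zero_norm' ?_ hg
    filter_upwards [hmem] with r hr
    simpa using hC r hr a ha
  -- the combined expression
  set G : ℝ → ℝ := fun r =>
    (deriv (fun s => F s a) r / r) * Y r a +
      w r a * (r * (deriv (F r) a / r ^ 2)) * Y r a -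
      (w r a * r + a) * (deriv (Y r) a / r ^ 2) * F r a with hGdef
  have hbig : Tendsto G L (𝓝 (2 * F₂ a - a * deriv Y₂ a)) := by
    have h := ((hA.mul hYlim).add ((hw0.mul (hrt.mul hB)).mul hYlim)).sub
      ((((hw0.mul hrt).add_const a).mul hCY).mul hFlim)
    convert h using 2
    ring
  have hzero : Tendsto G L (𝓝 0) := by
    apply Tendsto.congr' _ tendsto_const_nhds
    filter_upwards [hmem, hrpos] with r hr hrp
    have hne : r ≠ 0 := ne_of_gt hrp
    have h2 := heq r hr a ha
    simp only [hGdef]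
    field_simp
    linear_combination (-1) * h2
  have := tendsto_nhds_unique hbig hzero
  linarith
end
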